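/- Let n be a positive integer and g a nonnegative integer with gcd(n,g)=1. Then the spectral norm of the g-circulant matrix C_{n,g}(J) with first row (J_1,J_2,…,J_n) equals (J_{n+2} − 1)/2. -/

import Mathlib

/-!
Every entry of `C_{n,g}(J)` is nonnegative, every row is a cyclic shift of the first row, and,
since `g` is invertible modulo `n`, every column is a permutation of it too. So all row and
column sums equal `J_1 + ⋯ + J_n = (J_{n+2} - 1)/2`. For a nonnegative matrix whose row and
column sums all equal `s`, the Schur test (Cauchy–Schwarz in each row, weighted by the entries)
gives `‖A‖₂ ≤ s`, and the all-ones vector, an eigenvector for `s`, gives `‖A‖₂ ≥ s`.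
-/

/-- The `g`-circulant matrix of size `n` with first row `(a 0, a 1, …, a (n-1))`:
its `(i,j)` entry (0-indexed) equals `a ((j - i*g) mod n)`. -/
def gCirc {α : Type*} (n g : ℕ) (a : ℕ → α) : Matrix (Fin n) (Fin n) α :=
  Matrix.of fun i j => a ((j.val + (n - (i.val * g) % n)) % n)

/-- The spectral norm (operator 2-norm) of a real square matrix. -/
noncomputable def matrixSpectralNorm {n : ℕ} (A : Matrix (Fin n) (Fin n) ℝ) : ℝ :=
  ‖Matrix.toEuclideanCLM (𝕜 := ℝ) A‖

open Finset Matrix WithLp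

section SpectralNorm

variable {ι : Type*} [Fintype ι] [DecidableEq ι]

theorem norm_toEuclideanCLM_le_of_sum_abs_le (A : Matrix ι ι ℝ) {s : ℝ} (hs : 0 ≤ s)
    (hrow : ∀ i, ∑ j, |A i j| ≤ s) (hcol : ∀ j, ∑ i, |A i j| ≤ s) :
    ‖toEuclideanCLM (𝕜 := ℝ) A‖ ≤ s := by
  refine ContinuousLinearMap.opNorm_le_bound _ hs fun x => ?_
  rw [← sq_le_sq₀ (norm_nonneg _) (by positivity), mul_pow, EuclideanSpace.norm_sq_eq,
    EuclideanSpace.norm_sq_eq, ofLp_toEuclideanCLM]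
  simp only [Real.norm_eq_abs, sq_abs, mulVec, dotProduct]
  have hrow_cs : ∀ i, (∑ j, A i j * x j) ^ 2 ≤ s * ∑ j, |A i j| * x j ^ 2 := fun i =>
    calc (∑ j, A i j * x j) ^ 2 ≤ (∑ j, |A i j|) * ∑ j, |A i j| * x j ^ 2 :=
          sum_sq_le_sum_mul_sum_of_sq_le_mul _ (fun j _ => abs_nonneg (A i j))
            (fun j _ => by positivity)
            fun j _ => (by rw [mul_pow, ← sq_abs (A i j)]; ring : _ = _).le
      _ ≤ s * ∑ j, |A i j| * x j ^ 2 := by gcongr; exact hrow i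
  calc ∑ i, (∑ j, A i j * x j) ^ 2 ≤ ∑ i, s * ∑ j, |A i j| * x j ^ 2 :=
        sum_le_sum fun i _ => hrow_cs i
    _ = s * ∑ j, (∑ i, |A i j|) * x j ^ 2 := by rw [← mul_sum, sum_comm]; simp_rw [sum_mul]
    _ ≤ s * ∑ j, s * x j ^ 2 := by gcongr with j; exact hcol j
    _ = s ^ 2 * ∑ j, x j ^ 2 := by rw [← mul_sum]; ring

theorem abs_le_norm_toEuclideanCLM_of_sum_row_eq [Nonempty ι] (A : Matrix ι ι ℝ) {s : ℝ}
    (hrow : ∀ i, ∑ j, A i j = s) : |s| ≤ ‖toEuclideanCLM (𝕜 := ℝ) A‖ := by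
  set v : EuclideanSpace ℝ ι := toLp 2 fun _ => 1
  have hv : toEuclideanCLM (𝕜 := ℝ) A v = s • v := by
    ext i
    simp [v, mulVec, dotProduct, hrow]
  have hv_pos : 0 < ‖v‖ := by
    obtain ⟨i⟩ := ‹Nonempty ι›
    exact norm_pos_iff.2 fun h => by simpa [v] using congrArg (· i) h
  have := (toEuclideanCLM (𝕜 := ℝ) A).le_opNorm v
  rw [hv, norm_smul, Real.norm_eq_abs] at this
  exact le_of_mul_le_mul_right this hv_pos

theorem norm_toEuclideanCLM_eq_of_nonneg_of_sum_eq [Nonempty ι] (A : Matrix ι ι ℝ) {s : ℝ}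
    (hA : ∀ i j, 0 ≤ A i j) (hrow : ∀ i, ∑ j, A i j = s) (hcol : ∀ j, ∑ i, A i j = s) :
    ‖toEuclideanCLM (𝕜 := ℝ) A‖ = s := by
  have hs : 0 ≤ s := hrow (Classical.arbitrary ι) ▸ sum_nonneg fun j _ => hA _ j
  refine le_antisymm (norm_toEuclideanCLM_le_of_sum_abs_le A hs ?_ ?_) ?_
  · exact fun i => by simp_rw [abs_of_nonneg (hA _ _), hrow i, le_refl]
  · exact fun j => by simp_rw [abs_of_nonneg (hA _ _), hcol j, le_refl]
  · simpa [abs_of_nonneg hs] using abs_le_norm_toEuclideanCLM_of_sum_row_eq A hrow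

end SpectralNorm

namespace Fin

open Fin.CommRing

theorem mul_natCast_injective {n g : ℕ} [NeZero n] (hg : n.Coprime g) :
    Function.Injective fun i : Fin n => i * (g : Fin n) := by
  intro i k h
  have hmod : i.val * g ≡ k.val * g [MOD n] := by
    simpa [Nat.ModEq, Fin.ext_iff, Fin.val_mul, Fin.val_natCast, Nat.mul_mod_mod] using h
  exact Fin.ext (Nat.ModEq.eq_of_lt_of_lt (hmod.cancel_right_of_coprime hg) i.isLt k.isLt)

end Fin

section GCirculant

open Fin.CommRing

variable {α : Type*} {n : ℕ} [NeZero n]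

theorem gCirc_apply (g : ℕ) (a : ℕ → α) (i j : Fin n) :
    gCirc n g a i j = a (j - i * (g : Fin n) : Fin n) := by
  simp [gCirc, Fin.val_sub, Fin.val_mul, Fin.val_natCast, Nat.mul_mod_mod, add_comm]

variable [AddCommMonoid α]

theorem sum_gCirc_row (g : ℕ) (a : ℕ → α) (i : Fin n) :
    ∑ j, gCirc n g a i j = ∑ k ∈ range n, a k := by
  simp_rw [gCirc_apply]
  exact ((Equiv.subRight _).sum_comp fun k : Fin n => a k).trans (Fin.sum_univ_eq_sum_range a n)

theorem sum_gCirc_col {g : ℕ} (hg : n.Coprime g) (a : ℕ → α) (j : Fin n) :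
    ∑ i, gCirc n g a i j = ∑ k ∈ range n, a k := by
  have hbij : Function.Bijective fun i : Fin n => j - i * (g : Fin n) :=
    ((sub_right_injective).comp (Fin.mul_natCast_injective hg)).bijective_of_finite
  simp_rw [gCirc_apply]
  exact ((Equiv.ofBijective _ hbij).sum_comp fun k : Fin n => a k).trans
    (Fin.sum_univ_eq_sum_range a n)

end GCirculant

section Jacobsthal

variable {J : ℕ → ℝ}

theorem nonneg_of_jacobsthal_rec (hrec : ∀ m, J (m + 2) = J (m + 1) + 2 * J m)
    (h0 : 0 ≤ J 0) (h1 : 0 ≤ J 1) (m : ℕ) : 0 ≤ J m := by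
  induction m using Nat.strong_induction_on with
  | _ m ih =>
    match m, ih with
    | 0, _ => exact h0
    | 1, _ => exact h1
    | m + 2, ih => rw [hrec]; linarith [ih m (by omega), ih (m + 1) (by omega)]

theorem two_mul_sum_range_eq_of_jacobsthal_rec (hrec : ∀ m, J (m + 2) = J (m + 1) + 2 * J m)
    (N : ℕ) : 2 * ∑ m ∈ range N, J (m + 1) = J (N + 2) - J 2 := by
  rw [mul_sum, ← sum_range_sub (fun m => J (m + 2))]
  exact sum_congr rfl fun m _ => by rw [hrec (m + 1)]; ring

end Jacobsthal

/-- Spectral norm of the g-circulant matrix of Jacobsthal numbers. -/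
theorem spectralNorm_gCirc_jacobsthal
    (J : ℕ → ℝ) (hJ0 : J 0 = 0) (hJ1 : J 1 = 1)
    (hrec : ∀ m : ℕ, J (m + 2) = J (m + 1) + 2 * J m)
    (n r : ℕ) (hn : 0 < n) (hgcd : Nat.gcd n r = 1) :
    matrixSpectralNorm (gCirc n r (fun m => J (m + 1))) = (J (n + 2) - 1) / 2 := by
  have : NeZero n := ⟨hn.ne'⟩
  have hJ2 : J 2 = 1 := by simpa [hJ0, hJ1] using hrec 0
  have hsum : ∑ m ∈ range n, J (m + 1) = (J (n + 2) - 1) / 2 := by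
    linarith [two_mul_sum_range_eq_of_jacobsthal_rec hrec n]
  have hJ_nonneg := nonneg_of_jacobsthal_rec hrec hJ0.ge (hJ1 ▸ zero_le_one)
  exact norm_toEuclideanCLM_eq_of_nonneg_of_sum_eq _
    (fun i j => by rw [gCirc_apply]; exact hJ_nonneg _)
    (fun i => (sum_gCirc_row r _ i).trans hsum) (fun j => (sum_gCirc_col hgcd _ j).trans hsum)
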